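/- arXiv:2210.05352 — 6 statements merged into one kernel-verified Lean document; each statement's English description precedes it below -/
import Mathlib

section
/- For any square-summable u : ℤ×ℤ → ℝ, the following three identities hold: (i) ‖D₁,₀ u‖²_{ℓ²(ℤ²)} = ‖D₁₊ u‖²_{ℓ²(ℤ²)} − (1/4)‖Δ₁ u‖²_{ℓ²(ℤ²)}; (ii) ‖D₂,₀ u‖²_{ℓ²(ℤ²)} = ‖D₂₊ u‖²_{ℓ²(ℤ²)} − (1/4)‖Δ₂ u‖²_{ℓ²(ℤ²)}; (iii) ‖D₁,₀ D₂,₀ u‖²_{ℓ²(ℤ²)} = ‖D₁₊ D₂₊ u‖²_{ℓ²(ℤ²)} − (1/4)‖D₁₊ Δ₂ u‖²_{ℓ²(ℤ²)} − (1/4)‖D₂₊ Δ₁ u‖²_{ℓ²(ℤ²)} + (1/16)‖Δ₁ Δ₂ u‖²_{ℓ²(ℤ²)}. -/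
noncomputable section

/-- Forward difference in the first variable. -/
def D1p (u : ℤ → ℤ → ℝ) : ℤ → ℤ → ℝ := fun j k => u (j + 1) k - u j k
/-- Backward difference in the first variable. -/
def D1m (u : ℤ → ℤ → ℝ) : ℤ → ℤ → ℝ := fun j k => u j k - u (j - 1) k
/-- Forward difference in the second variable. -/
def D2p (u : ℤ → ℤ → ℝ) : ℤ → ℤ → ℝ := fun j k => u j (k + 1) - u j k
/-- Backward difference in the second variable. -/
def D2m (u : ℤ → ℤ → ℝ) : ℤ → ℤ → ℝ := fun j k => u j k - u j (k - 1)
/-- Centered difference in the first variable. -/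
def D10 (u : ℤ → ℤ → ℝ) : ℤ → ℤ → ℝ := fun j k => (D1p u j k + D1m u j k) / 2
/-- Centered difference in the second variable. -/
def D20 (u : ℤ → ℤ → ℝ) : ℤ → ℤ → ℝ := fun j k => (D2p u j k + D2m u j k) / 2
/-- Discrete Laplacian in the first variable. -/
def L1 (u : ℤ → ℤ → ℝ) : ℤ → ℤ → ℝ := D1p (D1m u)
/-- Discrete Laplacian in the second variable. -/
def L2 (u : ℤ → ℤ → ℝ) : ℤ → ℤ → ℝ := D2p (D2m u)

/-- Squared ℓ²(ℤ²) norm. -/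
def sqZ (u : ℤ → ℤ → ℝ) : ℝ := ∑' p : ℤ × ℤ, (u p.1 p.2) ^ 2
/-- ℓ²(ℤ²) scalar product. -/
def ipZ (u v : ℤ → ℤ → ℝ) : ℝ := ∑' p : ℤ × ℤ, u p.1 p.2 * v p.1 p.2

/-- Squared ℓ²(𝓘) norm over the interior indices 𝓘 = ℕ × ℤ of the half-space grid. -/
def sqH (u : ℤ → ℤ → ℝ) : ℝ := ∑' p : ℕ × ℤ, (u (p.1 : ℤ) p.2) ^ 2
/-- ℓ²(𝓘) scalar product over the interior indices 𝓘 = ℕ × ℤ. -/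
def ipH (u v : ℤ → ℤ → ℝ) : ℝ := ∑' p : ℕ × ℤ, u (p.1 : ℤ) p.2 * v (p.1 : ℤ) p.2
/-- Membership in ℋ : square-summable on the half-space grid and satisfying the
extrapolation (Neumann) boundary condition `u (-1) k = u 0 k`. -/
def memH (u : ℤ → ℤ → ℝ) : Prop :=
  (∀ k : ℤ, u (-1) k = u 0 k) ∧ Summable (fun p : ℕ × ℤ => (u (p.1 : ℤ) p.2) ^ 2)

/-- Squared ℓ²(𝔦) norm over the interior indices 𝔦 = ℕ × ℕ of the quarter-space grid. -/
def sqQ (u : ℤ → ℤ → ℝ) : ℝ := ∑' p : ℕ × ℕ, (u (p.1 : ℤ) (p.2 : ℤ)) ^ 2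
/-- ℓ²(𝔦) scalar product over the interior indices 𝔦 = ℕ × ℕ. -/
def ipQ (u v : ℤ → ℤ → ℝ) : ℝ :=
  ∑' p : ℕ × ℕ, u (p.1 : ℤ) (p.2 : ℤ) * v (p.1 : ℤ) (p.2 : ℤ)
/-- Membership in 𝔥 : square-summable on the quarter-space grid, satisfying the
extrapolation boundary conditions on both sides and the corner condition. -/
def memQ (u : ℤ → ℤ → ℝ) : Prop :=
  (∀ k : ℤ, -1 ≤ k → u (-1) k = u 0 k) ∧ (∀ j : ℤ, 0 ≤ j → u j (-1) = u j 0) ∧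
    Summable (fun p : ℕ × ℕ => (u (p.1 : ℤ) (p.2 : ℤ)) ^ 2)

/-- The skew-selfadjoint part `v` in the decomposition of the Lax-Wendroff scheme. -/
def vop (α β : ℝ) (u : ℤ → ℤ → ℝ) : ℤ → ℤ → ℝ :=
  fun j k => -α * D10 u j k - β * D20 u j k
/-- The selfadjoint part `w` in the decomposition of the Lax-Wendroff scheme. -/
def wop (α β : ℝ) (u : ℤ → ℤ → ℝ) : ℤ → ℤ → ℝ :=
  fun j k => -(α ^ 2 / 2) * L1 u j k - (β ^ 2 / 2) * L2 u j k
    - α * β * D10 (D20 u) j k + ((α ^ 2 + β ^ 2) / 8) * L1 (L2 u) j k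

/-!
`D₁,₀` is the mean of `D₁₊` and its shift by `-e₁`, while `Δ₁` is their difference. Since shifts
preserve the ℓ² norm, the parallelogram law gives `‖(a + Sa)/2‖² = ‖a‖² - ¼‖a - Sa‖²`, which is
(i) and (ii). Shift means and shift differences commute, so applying the
same identity in each direction to `D₁₊D₂₊u` gives (iii).
-/

section SquareSummable

variable {ι : Type*} {f g : ι → ℝ}

lemma Summable.sq_add (hf : Summable fun i => f i ^ 2) (hg : Summable fun i => g i ^ 2) :
    Summable fun i => (f i + g i) ^ 2 :=
  ((hf.add hg).mul_left 2).of_nonneg_of_le (fun _ => sq_nonneg _) fun _ => add_sq_le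

lemma Summable.sq_sub (hf : Summable fun i => f i ^ 2) (hg : Summable fun i => g i ^ 2) :
    Summable fun i => (f i - g i) ^ 2 := by
  simpa only [sub_eq_add_neg] using hf.sq_add (g := fun i => -g i) (by simpa only [neg_sq])

/-- The parallelogram law for `f` and `f ∘ e`, which have the same norm since `e` is a bijection. -/
theorem tsum_sq_midpoint_comp_equiv (e : ι ≃ ι) (hf : Summable fun i => f i ^ 2) :
    ∑' i, ((f i + f (e i)) / 2) ^ 2 = ∑' i, f i ^ 2 - 1 / 4 * ∑' i, (f i - f (e i)) ^ 2 := by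
  have hfe : Summable fun i => f (e i) ^ 2 := e.summable_iff.2 hf
  have hsum : Summable fun i => (f i ^ 2 + f (e i) ^ 2) / 2 := (hf.add hfe).div_const 2
  have hdiff : Summable fun i => 1 / 4 * (f i - f (e i)) ^ 2 := (hf.sq_sub hfe).mul_left _
  have hparallelogram : ∀ i, ((f i + f (e i)) / 2) ^ 2
      = (f i ^ 2 + f (e i) ^ 2) / 2 - 1 / 4 * (f i - f (e i)) ^ 2 := fun i => by ring
  simp_rw [hparallelogram]
  rw [hsum.tsum_sub hdiff, tsum_div_const, hf.tsum_add hfe, tsum_mul_left,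
    e.tsum_eq fun i => f i ^ 2]
  ring

end SquareSummable

section Grid

variable {u v : ℤ → ℤ → ℝ}

def meanShift (q : ℤ × ℤ) (v : ℤ → ℤ → ℝ) : ℤ → ℤ → ℝ :=
  fun j k => (v j k + v (j + q.1) (k + q.2)) / 2

def diffShift (q : ℤ × ℤ) (v : ℤ → ℤ → ℝ) : ℤ → ℤ → ℝ :=
  fun j k => v j k - v (j + q.1) (k + q.2)

lemma summable_sq_comp_add (hv : Summable fun p : ℤ × ℤ => v p.1 p.2 ^ 2) (q : ℤ × ℤ) :
    Summable fun p : ℤ × ℤ => v (p.1 + q.1) (p.2 + q.2) ^ 2 :=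
  (Equiv.addRight q).summable_iff.2 hv

lemma summable_sq_meanShift (q : ℤ × ℤ) (hv : Summable fun p : ℤ × ℤ => v p.1 p.2 ^ 2) :
    Summable fun p : ℤ × ℤ => meanShift q v p.1 p.2 ^ 2 := by
  simpa only [meanShift, div_pow] using (hv.sq_add (summable_sq_comp_add hv q)).div_const (2 ^ 2)

lemma summable_sq_diffShift (q : ℤ × ℤ) (hv : Summable fun p : ℤ × ℤ => v p.1 p.2 ^ 2) :
    Summable fun p : ℤ × ℤ => diffShift q v p.1 p.2 ^ 2 :=
  hv.sq_sub (summable_sq_comp_add hv q)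

lemma summable_sq_D1p (hv : Summable fun p : ℤ × ℤ => v p.1 p.2 ^ 2) :
    Summable fun p : ℤ × ℤ => D1p v p.1 p.2 ^ 2 := by
  simpa [D1p] using (summable_sq_comp_add hv (1, 0)).sq_sub hv

lemma summable_sq_D2p (hv : Summable fun p : ℤ × ℤ => v p.1 p.2 ^ 2) :
    Summable fun p : ℤ × ℤ => D2p v p.1 p.2 ^ 2 := by
  simpa [D2p] using (summable_sq_comp_add hv (0, 1)).sq_sub hv

theorem sqZ_meanShift (q : ℤ × ℤ) (hv : Summable fun p : ℤ × ℤ => v p.1 p.2 ^ 2) :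
    sqZ (meanShift q v) = sqZ v - 1 / 4 * sqZ (diffShift q v) :=
  tsum_sq_midpoint_comp_equiv (f := fun p : ℤ × ℤ => v p.1 p.2) (Equiv.addRight q) hv

lemma diffShift_meanShift (q r : ℤ × ℤ) :
    diffShift q (meanShift r v) = meanShift r (diffShift q v) := by
  funext j k; simp only [diffShift, meanShift]; ring_nf

lemma D10_eq_meanShift : D10 u = meanShift (-1, 0) (D1p u) := by
  funext j k; simp only [D10, D1p, D1m, meanShift]; ring_nf

lemma D20_eq_meanShift : D20 u = meanShift (0, -1) (D2p u) := by
  funext j k; simp only [D20, D2p, D2m, meanShift]; ring_nf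

lemma L1_eq_diffShift : L1 u = diffShift (-1, 0) (D1p u) := by
  funext j k; simp only [L1, D1p, D1m, diffShift]; ring_nf

lemma L2_eq_diffShift : L2 u = diffShift (0, -1) (D2p u) := by
  funext j k; simp only [L2, D2p, D2m, diffShift]; ring_nf

lemma D10_D20_eq_meanShift :
    D10 (D20 u) = meanShift (-1, 0) (meanShift (0, -1) (D1p (D2p u))) := by
  funext j k; simp only [D10, D20, D1p, D1m, D2p, D2m, meanShift]; ring_nf

lemma D2p_L1_eq_diffShift : D2p (L1 u) = diffShift (-1, 0) (D1p (D2p u)) := by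
  funext j k; simp only [L1, D1p, D1m, D2p, diffShift]; ring_nf

lemma D1p_L2_eq_diffShift : D1p (L2 u) = diffShift (0, -1) (D1p (D2p u)) := by
  funext j k; simp only [L2, D1p, D2m, D2p, diffShift]; ring_nf

lemma L1_L2_eq_diffShift : L1 (L2 u) = diffShift (0, -1) (D2p (L1 u)) := by
  funext j k; simp only [L1, L2, D1p, D1m, D2p, D2m, diffShift]; ring_nf

end Grid

/-- Lemma 2: the three discrete product identities in ℓ²(ℤ²). -/
theorem lax_wendroff_lemma2 (u : ℤ → ℤ → ℝ)
    (hu : Summable fun p : ℤ × ℤ => (u p.1 p.2) ^ 2) :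
    sqZ (D10 u) = sqZ (D1p u) - (1 / 4) * sqZ (L1 u) ∧
    sqZ (D20 u) = sqZ (D2p u) - (1 / 4) * sqZ (L2 u) ∧
    sqZ (D10 (D20 u)) = sqZ (D1p (D2p u)) - (1 / 4) * sqZ (D1p (L2 u))
      - (1 / 4) * sqZ (D2p (L1 u)) + (1 / 16) * sqZ (L1 (L2 u)) := by
  have hb := summable_sq_D1p (summable_sq_D2p hu)
  refine ⟨?_, ?_, ?_⟩
  · rw [D10_eq_meanShift, L1_eq_diffShift, sqZ_meanShift _ (summable_sq_D1p hu)]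
  · rw [D20_eq_meanShift, L2_eq_diffShift, sqZ_meanShift _ (summable_sq_D2p hu)]
  · rw [D10_D20_eq_meanShift, sqZ_meanShift _ (summable_sq_meanShift _ hb),
      diffShift_meanShift, sqZ_meanShift _ hb, sqZ_meanShift _ (summable_sq_diffShift _ hb),
      ← D1p_L2_eq_diffShift, ← D2p_L1_eq_diffShift, ← L1_L2_eq_diffShift]
    ring
end
end

section
/- Let α, β be real numbers and let u : ℤ×ℤ → ℝ be square summable. With v := −α D₁,₀ u − β D₂,₀ u and w := −(α²/2) Δ₁ u − (β²/2) Δ₂ u − αβ D₁,₀ D₂,₀ u + ((α²+β²)/8) Δ₁ Δ₂ u, there holds the exact identity: ‖v‖²_{ℓ²(ℤ²)} − 2⟨u;w⟩_{ℓ²(ℤ²)} = −(α²/4)‖Δ₁ u‖²_{ℓ²(ℤ²)} − (β²/4)‖Δ₂ u‖²_{ℓ²(ℤ²)} − ((α²+β²)/4)‖D₁₊ D₂₊ u‖²_{ℓ²(ℤ²)}. -/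
noncomputable section

/-! Everything reduces to summation by parts, `⟨f, D₁₊g⟩ = -⟨D₁₋f, g⟩`, which is a translation of
the index set, and its transpose in the second variable. It gives `⟨u, Δ₁u⟩ = -‖D₁₋u‖²`, the
skew-adjointness of `D₁,₀` (so the mixed terms of `‖v‖²` and `2⟨u, w⟩` cancel), and
`⟨u, Δ₁Δ₂u⟩ = ‖D₂₋D₁₋u‖² = ‖D₁₊D₂₊u‖²`. The pure terms combine through `D₁,₀ = D₁₋ + Δ₁/2` and
`⟨g, D₁₊g⟩ = -‖D₁₊g‖²/2` into `‖D₁,₀u‖² + ⟨u, Δ₁u⟩ = -‖Δ₁u‖²/4`, and likewise in the second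
variable. -/

def SqSummable (f : ℤ → ℤ → ℝ) : Prop := Summable fun p : ℤ × ℤ => f p.1 p.2 ^ 2

def shift (a b : ℤ) (f : ℤ → ℤ → ℝ) : ℤ → ℤ → ℝ := fun j k => f (j + a) (k + b)

def transpose (f : ℤ → ℤ → ℝ) : ℤ → ℤ → ℝ := fun j k => f k j

def shiftEquiv (a b : ℤ) : ℤ × ℤ ≃ ℤ × ℤ := (Equiv.addRight a).prodCongr (Equiv.addRight b)

namespace SqSummable

variable {f g : ℤ → ℤ → ℝ}

theorem summable_mul (hf : SqSummable f) (hg : SqSummable g) :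
    Summable fun p : ℤ × ℤ => f p.1 p.2 * g p.1 p.2 := by
  refine Summable.of_norm_bounded (Summable.add hf hg) fun p => ?_
  rw [Real.norm_eq_abs, abs_mul]
  nlinarith [sq_abs (f p.1 p.2), sq_abs (g p.1 p.2), abs_nonneg (f p.1 p.2),
    abs_nonneg (g p.1 p.2), sq_nonneg (|f p.1 p.2| - |g p.1 p.2|)]

theorem add (hf : SqSummable f) (hg : SqSummable g) : SqSummable (f + g) := by
  have := ((Summable.add hf hg).add ((hf.summable_mul hg).mul_left 2))
  refine this.congr fun p => ?_
  simp only [Pi.add_apply]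
  ring

theorem smul (c : ℝ) (hf : SqSummable f) : SqSummable (c • f) :=
  (Summable.mul_left (c ^ 2) hf).congr fun p => by simp only [Pi.smul_apply, smul_eq_mul]; ring

theorem sub (hf : SqSummable f) (hg : SqSummable g) : SqSummable (f - g) := by
  simpa only [sub_eq_add_neg, neg_one_smul] using hf.add (hg.smul (-1))

theorem shift (a b : ℤ) (hf : SqSummable f) : SqSummable (_root_.shift a b f) :=
  (shiftEquiv a b).summable_iff.mpr hf

theorem transpose (hf : SqSummable f) : SqSummable (_root_.transpose f) :=
  (Equiv.prodComm ℤ ℤ).summable_iff.mpr hf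

end SqSummable

section InnerProduct

variable {f g h : ℤ → ℤ → ℝ}

theorem ipZ_comm (f g : ℤ → ℤ → ℝ) : ipZ f g = ipZ g f := by
  simp only [ipZ, mul_comm]

theorem sqZ_eq_ipZ (f : ℤ → ℤ → ℝ) : sqZ f = ipZ f f := by
  simp only [sqZ, ipZ, sq]

theorem ipZ_add_right (hf : SqSummable f) (hg : SqSummable g) (hh : SqSummable h) :
    ipZ f (g + h) = ipZ f g + ipZ f h := by
  simp only [ipZ, Pi.add_apply, mul_add]
  exact (hf.summable_mul hg).tsum_add (hf.summable_mul hh)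

theorem ipZ_sub_right (hf : SqSummable f) (hg : SqSummable g) (hh : SqSummable h) :
    ipZ f (g - h) = ipZ f g - ipZ f h := by
  simp only [ipZ, Pi.sub_apply, mul_sub]
  exact (hf.summable_mul hg).tsum_sub (hf.summable_mul hh)

theorem ipZ_smul_right (c : ℝ) (f g : ℤ → ℤ → ℝ) : ipZ f (c • g) = c * ipZ f g := by
  simp only [ipZ, Pi.smul_apply, smul_eq_mul, mul_left_comm _ c, tsum_mul_left]

theorem ipZ_add_left (hf : SqSummable f) (hg : SqSummable g) (hh : SqSummable h) :
    ipZ (f + g) h = ipZ f h + ipZ g h := by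
  rw [ipZ_comm, ipZ_add_right hh hf hg, ipZ_comm h, ipZ_comm h]

theorem ipZ_sub_left (hf : SqSummable f) (hg : SqSummable g) (hh : SqSummable h) :
    ipZ (f - g) h = ipZ f h - ipZ g h := by
  rw [ipZ_comm, ipZ_sub_right hh hf hg, ipZ_comm h, ipZ_comm h]

theorem ipZ_smul_left (c : ℝ) (f g : ℤ → ℤ → ℝ) : ipZ (c • f) g = c * ipZ f g := by
  rw [ipZ_comm, ipZ_smul_right, ipZ_comm]

theorem ipZ_shift_left (a b : ℤ) (f g : ℤ → ℤ → ℝ) :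
    ipZ (shift a b f) g = ipZ f (shift (-a) (-b) g) := by
  rw [ipZ, ← (shiftEquiv (-a) (-b)).tsum_eq]
  simp [shiftEquiv, shift, ipZ]

theorem ipZ_transpose (f g : ℤ → ℤ → ℝ) : ipZ (transpose f) (transpose g) = ipZ f g :=
  (Equiv.prodComm ℤ ℤ).tsum_eq fun p => f p.1 p.2 * g p.1 p.2

theorem ipZ_transpose_right (f g : ℤ → ℤ → ℝ) : ipZ f (transpose g) = ipZ (transpose f) g :=
  ipZ_transpose (transpose f) g

theorem sqZ_transpose (f : ℤ → ℤ → ℝ) : sqZ (transpose f) = sqZ f := by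
  rw [sqZ_eq_ipZ, ipZ_transpose, sqZ_eq_ipZ]

theorem sqZ_add (hf : SqSummable f) (hg : SqSummable g) :
    sqZ (f + g) = sqZ f + 2 * ipZ f g + sqZ g := by
  rw [sqZ_eq_ipZ, ipZ_add_left hf hg (hf.add hg), ipZ_add_right hf hf hg,
    ipZ_add_right hg hf hg, ipZ_comm g f, sqZ_eq_ipZ, sqZ_eq_ipZ]
  ring

theorem sqZ_smul (c : ℝ) (f : ℤ → ℤ → ℝ) : sqZ (c • f) = c ^ 2 * sqZ f := by
  rw [sqZ_eq_ipZ, ipZ_smul_left, ipZ_smul_right, sqZ_eq_ipZ]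
  ring

theorem sqZ_shift (a b : ℤ) (f : ℤ → ℤ → ℝ) : sqZ (shift a b f) = sqZ f := by
  rw [sqZ_eq_ipZ, ipZ_shift_left, sqZ_eq_ipZ]
  congr
  funext j k
  simp [shift]

end InnerProduct

section DifferenceOperators

variable {f : ℤ → ℤ → ℝ}

theorem D1p_eq_shift_sub (f : ℤ → ℤ → ℝ) : D1p f = shift 1 0 f - f := by
  funext j k
  simp [D1p, shift]

theorem D1m_eq_sub_shift (f : ℤ → ℤ → ℝ) : D1m f = f - shift (-1) 0 f := by
  funext j k
  simp [D1m, shift, sub_eq_add_neg]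

theorem D10_eq_smul (f : ℤ → ℤ → ℝ) : D10 f = (2⁻¹ : ℝ) • (D1p f + D1m f) := by
  funext j k
  simp [D10, div_eq_inv_mul]

theorem D2p_eq_transpose (f : ℤ → ℤ → ℝ) : D2p f = transpose (D1p (transpose f)) := rfl

theorem D2m_eq_transpose (f : ℤ → ℤ → ℝ) : D2m f = transpose (D1m (transpose f)) := rfl

theorem D20_eq_transpose (f : ℤ → ℤ → ℝ) : D20 f = transpose (D10 (transpose f)) := rfl

theorem L2_eq_transpose (f : ℤ → ℤ → ℝ) : L2 f = transpose (L1 (transpose f)) := rfl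

theorem D10_eq_D1m_add_smul_L1 (f : ℤ → ℤ → ℝ) : D10 f = D1m f + (2⁻¹ : ℝ) • L1 f := by
  funext j k
  simp only [D10, L1, D1p, D1m, Pi.add_apply, Pi.smul_apply, smul_eq_mul, add_sub_cancel_right]
  ring

theorem D1m_D2m_comm (f : ℤ → ℤ → ℝ) : D1m (D2m f) = D2m (D1m f) := by
  funext j k
  simp only [D1m, D2m]
  ring

theorem D1m_D2p_comm (f : ℤ → ℤ → ℝ) : D1m (D2p f) = D2p (D1m f) := by
  funext j k
  simp only [D1m, D2p]
  ring

theorem D1p_D2p_eq_shift (f : ℤ → ℤ → ℝ) : D1p (D2p f) = shift 1 1 (D2m (D1m f)) := by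
  funext j k
  simp only [D1p, D2p, D2m, D1m, shift, add_sub_cancel_right]
  ring

namespace SqSummable

theorem D1p (hf : SqSummable f) : SqSummable (D1p f) := by
  rw [D1p_eq_shift_sub]
  exact (hf.shift 1 0).sub hf

theorem D1m (hf : SqSummable f) : SqSummable (D1m f) := by
  rw [D1m_eq_sub_shift]
  exact hf.sub (hf.shift (-1) 0)

theorem D10 (hf : SqSummable f) : SqSummable (D10 f) := by
  rw [D10_eq_smul]
  exact (hf.D1p.add hf.D1m).smul _

theorem L1 (hf : SqSummable f) : SqSummable (L1 f) := hf.D1m.D1p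

theorem D2p (hf : SqSummable f) : SqSummable (D2p f) := hf.transpose.D1p.transpose

theorem D2m (hf : SqSummable f) : SqSummable (D2m f) := hf.transpose.D1m.transpose

theorem D20 (hf : SqSummable f) : SqSummable (D20 f) := hf.transpose.D10.transpose

theorem L2 (hf : SqSummable f) : SqSummable (L2 f) := hf.D2m.D2p

end SqSummable

end DifferenceOperators

section SummationByParts

variable {f g u : ℤ → ℤ → ℝ}

theorem ipZ_D1p_right (hf : SqSummable f) (hg : SqSummable g) :
    ipZ f (D1p g) = -ipZ (D1m f) g := by
  rw [D1p_eq_shift_sub, D1m_eq_sub_shift, ipZ_sub_right hf (hg.shift 1 0) hg,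
    ipZ_sub_left hf (hf.shift (-1) 0) hg, ipZ_shift_left, neg_neg, neg_zero]
  ring

theorem ipZ_D1m_right (hf : SqSummable f) (hg : SqSummable g) :
    ipZ f (D1m g) = -ipZ (D1p f) g := by
  rw [ipZ_comm, ipZ_comm (D1p f), ← neg_eq_iff_eq_neg, ← ipZ_D1p_right hg hf]

theorem ipZ_D2p_right (hf : SqSummable f) (hg : SqSummable g) :
    ipZ f (D2p g) = -ipZ (D2m f) g := by
  rw [D2p_eq_transpose, D2m_eq_transpose, ipZ_transpose_right, ← ipZ_transpose _ g]
  exact ipZ_D1p_right hf.transpose hg.transpose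

theorem ipZ_D10_right (hf : SqSummable f) (hg : SqSummable g) :
    ipZ f (D10 g) = -ipZ (D10 f) g := by
  rw [D10_eq_smul, D10_eq_smul, ipZ_smul_right, ipZ_smul_left,
    ipZ_add_right hf hg.D1p hg.D1m, ipZ_add_left hf.D1p hf.D1m hg,
    ipZ_D1p_right hf hg, ipZ_D1m_right hf hg]
  ring

theorem ipZ_self_D1p (hf : SqSummable f) : ipZ f (D1p f) = -sqZ (D1p f) / 2 := by
  have hτ := hf.shift 1 0
  have hnorm : ipZ (shift 1 0 f) (shift 1 0 f) = ipZ f f := by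
    rw [← sqZ_eq_ipZ, ← sqZ_eq_ipZ, sqZ_shift]
  rw [sqZ_eq_ipZ, D1p_eq_shift_sub, ipZ_sub_left hτ hf (hτ.sub hf), ipZ_sub_right hτ hτ hf,
    ipZ_sub_right hf hτ hf, ipZ_comm (shift 1 0 f) f, hnorm]
  ring

theorem sqZ_D10_add_ipZ_L1 (hu : SqSummable u) :
    sqZ (D10 u) + ipZ u (L1 u) = -sqZ (L1 u) / 4 := by
  rw [D10_eq_D1m_add_smul_L1, sqZ_add hu.D1m (hu.L1.smul _), ipZ_smul_right, sqZ_smul, L1,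
    ipZ_self_D1p hu.D1m, ipZ_D1p_right hu hu.D1m, sqZ_eq_ipZ (D1m u)]
  ring

theorem sqZ_D20_add_ipZ_L2 (hu : SqSummable u) :
    sqZ (D20 u) + ipZ u (L2 u) = -sqZ (L2 u) / 4 := by
  rw [D20_eq_transpose, L2_eq_transpose, sqZ_transpose, sqZ_transpose, ipZ_transpose_right]
  exact sqZ_D10_add_ipZ_L1 hu.transpose

theorem ipZ_L1_L2 (hu : SqSummable u) : ipZ u (L1 (L2 u)) = sqZ (D1p (D2p u)) :=
  calc ipZ u (L1 (L2 u)) = -ipZ (D1m u) (D1m (D2p (D2m u))) :=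
        ipZ_D1p_right hu hu.L2.D1m
    _ = ipZ (D2m (D1m u)) (D1m (D2m u)) := by
        rw [D1m_D2p_comm, ipZ_D2p_right hu.D1m hu.D2m.D1m, neg_neg]
    _ = sqZ (D1p (D2p u)) := by
        rw [D1m_D2m_comm, ← sqZ_eq_ipZ, D1p_D2p_eq_shift, sqZ_shift]

end SummationByParts

section LaxWendroff

variable {u : ℤ → ℤ → ℝ}

theorem sqZ_vop (α β : ℝ) (hu : SqSummable u) :
    sqZ (vop α β u) = α ^ 2 * sqZ (D10 u) + 2 * α * β * ipZ (D10 u) (D20 u)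
      + β ^ 2 * sqZ (D20 u) := by
  have hv : vop α β u = (-α) • D10 u + (-β) • D20 u := by
    funext j k
    simp only [vop, Pi.add_apply, Pi.smul_apply, smul_eq_mul]
    ring
  rw [hv, sqZ_add (hu.D10.smul _) (hu.D20.smul _), sqZ_smul, sqZ_smul, ipZ_smul_left,
    ipZ_smul_right]
  ring

theorem ipZ_wop (α β : ℝ) (hu : SqSummable u) :
    ipZ u (wop α β u) = -(α ^ 2 / 2) * ipZ u (L1 u) - (β ^ 2 / 2) * ipZ u (L2 u)
      - α * β * ipZ u (D10 (D20 u)) + ((α ^ 2 + β ^ 2) / 8) * ipZ u (L1 (L2 u)) := by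
  have hL1 := hu.L1.smul (-(α ^ 2 / 2))
  have hL2 := hu.L2.smul (-(β ^ 2 / 2))
  have hD := hu.D20.D10.smul (α * β)
  have hLL := hu.L2.L1.smul ((α ^ 2 + β ^ 2) / 8)
  have hw : wop α β u = (-(α ^ 2 / 2)) • L1 u + (-(β ^ 2 / 2)) • L2 u - (α * β) • D10 (D20 u)
      + ((α ^ 2 + β ^ 2) / 8) • L1 (L2 u) := by
    funext j k
    simp only [wop, Pi.add_apply, Pi.sub_apply, Pi.smul_apply, smul_eq_mul]
    ring
  rw [hw, ipZ_add_right hu ((hL1.add hL2).sub hD) hLL, ipZ_sub_right hu (hL1.add hL2) hD,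
    ipZ_add_right hu hL1 hL2]
  simp only [ipZ_smul_right]
  ring

end LaxWendroff

/-- Lemma 1: exact identity for the skew-selfadjoint/selfadjoint decomposition in ℓ²(ℤ²). -/
theorem lax_wendroff_lemma1 (α β : ℝ) (u : ℤ → ℤ → ℝ)
    (hu : Summable fun p : ℤ × ℤ => (u p.1 p.2) ^ 2) :
    sqZ (vop α β u) - 2 * ipZ u (wop α β u) =
      -(α ^ 2 / 4) * sqZ (L1 u) - (β ^ 2 / 4) * sqZ (L2 u)
        - ((α ^ 2 + β ^ 2) / 4) * sqZ (D1p (D2p u)) := by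
  have hu : SqSummable u := hu
  rw [sqZ_vop α β hu, ipZ_wop α β hu, ipZ_D10_right hu hu.D20]
  linear_combination α ^ 2 * sqZ_D10_add_ipZ_L1 hu + β ^ 2 * sqZ_D20_add_ipZ_L2 hu
    - (α ^ 2 + β ^ 2) / 4 * ipZ_L1_L2 hu
end
end

section
/- Let α, β be real numbers and let u : ℤ×ℤ → ℝ be square summable. With w := −(α²/2) Δ₁ u − (β²/2) Δ₂ u − αβ D₁,₀ D₂,₀ u + ((α²+β²)/8) Δ₁ Δ₂ u, there holds: 4‖w‖²_{ℓ²(ℤ²)} ≤ 2(α²+β²) · ( α²‖Δ₁ u‖²_{ℓ²(ℤ²)} + β²‖Δ₂ u‖²_{ℓ²(ℤ²)} + (α²+β²)‖D₁₊ D₂₊ u‖²_{ℓ²(ℤ²)} ). -/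
noncomputable section

/-! ### Auxiliary lemmas -/

section Aux

set_option maxHeartbeats 1000000 in
/-- The key pointwise algebraic inequality. -/
lemma lw_key (α β a b p q r s : ℝ) :
    4 * (-(α^2/2)*a - (β^2/2)*b - α*β*((p+q+r+s)/4) + ((α^2+β^2)/8)*(p+q-r-s))^2 ≤
      (2*(α^2+β^2)*α^2) * a^2 + ((2*(α^2+β^2)*β^2) * b^2
      + (((α^2+β^2)*((α-β)^2/2)) * p^2 + (((α^2+β^2)*((α-β)^2/2)) * q^2
      + (((α^2+β^2)*((α+β)^2/2)) * r^2 + ((α^2+β^2)*((α+β)^2/2)) * s^2)))) := by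
  obtain ⟨X, hX⟩ : ∃ X, X = -α*a + α*((p+q-r-s)/4) - β*((p+q+r+s)/4) := ⟨_, rfl⟩
  obtain ⟨Y, hY⟩ : ∃ Y, Y = -β*b + β*((p+q-r-s)/4) - α*((p+q+r+s)/4) := ⟨_, rfl⟩
  have hW : 4 * (-(α^2/2)*a - (β^2/2)*b - α*β*((p+q+r+s)/4) + ((α^2+β^2)/8)*(p+q-r-s))^2
      = (α*X+β*Y)^2 := by rw [hX, hY]; ring
  have h1 : (α*X+β*Y)^2 ≤ (α^2+β^2)*(X^2+Y^2) := by nlinarith [sq_nonneg (β*X-α*Y)]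
  have h2 : X^2+Y^2 ≤ 2*α^2*a^2 + 2*β^2*b^2 + ((α-β)^2/2)*(p^2+q^2) + ((α+β)^2/2)*(r^2+s^2) := by
    subst hX hY
    nlinarith [sq_nonneg (α*((p+q-r-s)/4) - β*((p+q+r+s)/4) + α*a),
      sq_nonneg (β*((p+q-r-s)/4) - α*((p+q+r+s)/4) + β*b),
      mul_nonneg (sq_nonneg (α-β)) (sq_nonneg (p-q)),
      mul_nonneg (sq_nonneg (α+β)) (sq_nonneg (r-s))]
  have h3 := mul_le_mul_of_nonneg_left h2 (by positivity : (0:ℝ) ≤ α^2+β^2)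
  have h4 : (α^2+β^2) * (2*α^2*a^2 + 2*β^2*b^2 + ((α-β)^2/2)*(p^2+q^2) + ((α+β)^2/2)*(r^2+s^2))
      = (2*(α^2+β^2)*α^2) * a^2 + ((2*(α^2+β^2)*β^2) * b^2
      + (((α^2+β^2)*((α-β)^2/2)) * p^2 + (((α^2+β^2)*((α-β)^2/2)) * q^2
      + (((α^2+β^2)*((α+β)^2/2)) * r^2 + ((α^2+β^2)*((α+β)^2/2)) * s^2)))) := by ring
  rw [hW]
  linarith [h1, h3, h4.ge, h4.le]

lemma lw_wop_eq (α β : ℝ) (u : ℤ → ℤ → ℝ) (j k : ℤ) :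
    wop α β u j k = -(α^2/2)*(L1 u j k) - (β^2/2)*(L2 u j k)
      - α*β*((D1p (D2p u) j k + D1m (D2m u) j k + D1p (D2m u) j k + D1m (D2p u) j k)/4)
      + ((α^2+β^2)/8)*(D1p (D2p u) j k + D1m (D2m u) j k - D1p (D2m u) j k
          - D1m (D2p u) j k) := by
  simp only [wop, L1, L2, D10, D20, D1p, D1m, D2p, D2m]
  ring_nf

lemma lw_S2shift1 {u : ℤ → ℤ → ℝ} (hu : Summable fun p : ℤ × ℤ => (u p.1 p.2) ^ 2) (m : ℤ) :
    Summable fun p : ℤ × ℤ => (u (p.1 + m) p.2) ^ 2 :=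
  ((Equiv.prodCongr (Equiv.addRight m) (Equiv.refl ℤ)).summable_iff
    (f := fun p : ℤ × ℤ => (u p.1 p.2) ^ 2)).2 hu

lemma lw_S2shift2 {u : ℤ → ℤ → ℝ} (hu : Summable fun p : ℤ × ℤ => (u p.1 p.2) ^ 2) (n : ℤ) :
    Summable fun p : ℤ × ℤ => (u p.1 (p.2 + n)) ^ 2 :=
  ((Equiv.prodCongr (Equiv.refl ℤ) (Equiv.addRight n)).summable_iff
    (f := fun p : ℤ × ℤ => (u p.1 p.2) ^ 2)).2 hu

lemma lw_S2combo {v w : ℤ × ℤ → ℝ} (hv : Summable fun p => (v p) ^ 2)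
    (hw : Summable fun p => (w p) ^ 2) (a b : ℝ) :
    Summable fun p => (a * v p + b * w p) ^ 2 := by
  apply Summable.of_nonneg_of_le (fun p => sq_nonneg _) (fun p => ?_)
    ((hv.mul_left (2 * a ^ 2)).add (hw.mul_left (2 * b ^ 2)))
  nlinarith [sq_nonneg (a * v p - b * w p)]

lemma lw_S2_D1p {v : ℤ → ℤ → ℝ} (h : Summable fun p : ℤ × ℤ => (v p.1 p.2) ^ 2) :
    Summable fun p : ℤ × ℤ => (D1p v p.1 p.2) ^ 2 :=
  (lw_S2combo (lw_S2shift1 h 1) h 1 (-1)).congr fun p => by simp only [D1p]; ring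

lemma lw_S2_D1m {v : ℤ → ℤ → ℝ} (h : Summable fun p : ℤ × ℤ => (v p.1 p.2) ^ 2) :
    Summable fun p : ℤ × ℤ => (D1m v p.1 p.2) ^ 2 :=
  (lw_S2combo h (lw_S2shift1 h (-1)) 1 (-1)).congr fun p => by
    simp only [D1m, sub_eq_add_neg]; ring

lemma lw_S2_D2p {v : ℤ → ℤ → ℝ} (h : Summable fun p : ℤ × ℤ => (v p.1 p.2) ^ 2) :
    Summable fun p : ℤ × ℤ => (D2p v p.1 p.2) ^ 2 :=
  (lw_S2combo (lw_S2shift2 h 1) h 1 (-1)).congr fun p => by simp only [D2p]; ring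

lemma lw_S2_D2m {v : ℤ → ℤ → ℝ} (h : Summable fun p : ℤ × ℤ => (v p.1 p.2) ^ 2) :
    Summable fun p : ℤ × ℤ => (D2m v p.1 p.2) ^ 2 :=
  (lw_S2combo h (lw_S2shift2 h (-1)) 1 (-1)).congr fun p => by
    simp only [D2m, sub_eq_add_neg]; ring

lemma lw_S2_D10 {v : ℤ → ℤ → ℝ} (h : Summable fun p : ℤ × ℤ => (v p.1 p.2) ^ 2) :
    Summable fun p : ℤ × ℤ => (D10 v p.1 p.2) ^ 2 :=
  (lw_S2combo (lw_S2_D1p h) (lw_S2_D1m h) (1/2) (1/2)).congr fun p => by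
    simp only [D10]; ring

lemma lw_S2_D20 {v : ℤ → ℤ → ℝ} (h : Summable fun p : ℤ × ℤ => (v p.1 p.2) ^ 2) :
    Summable fun p : ℤ × ℤ => (D20 v p.1 p.2) ^ 2 :=
  (lw_S2combo (lw_S2_D2p h) (lw_S2_D2m h) (1/2) (1/2)).congr fun p => by
    simp only [D20]; ring

lemma lw_mm_eq (u : ℤ → ℤ → ℝ) (j k : ℤ) :
    D1m (D2m u) j k = D1p (D2p u) (j-1) (k-1) := by
  simp only [D1p, D1m, D2p, D2m, sub_add_cancel]
lemma lw_pm_eq (u : ℤ → ℤ → ℝ) (j k : ℤ) :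
    D1p (D2m u) j k = D1p (D2p u) j (k-1) := by
  simp only [D1p, D1m, D2p, D2m, sub_add_cancel]
lemma lw_mp_eq (u : ℤ → ℤ → ℝ) (j k : ℤ) :
    D1m (D2p u) j k = D1p (D2p u) (j-1) k := by
  simp only [D1p, D1m, D2p, D2m, sub_add_cancel]

lemma lw_tsum_mm (u : ℤ → ℤ → ℝ) :
    ∑' p : ℤ × ℤ, (D1m (D2m u) p.1 p.2) ^ 2 = sqZ (D1p (D2p u)) := by
  have h : ∀ p : ℤ × ℤ, (D1m (D2m u) p.1 p.2) ^ 2 = (D1p (D2p u) (p.1-1) (p.2-1)) ^ 2 :=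
    fun p => by rw [lw_mm_eq]
  rw [tsum_congr h]
  exact (Equiv.prodCongr (Equiv.subRight (1:ℤ)) (Equiv.subRight (1:ℤ))).tsum_eq
    (fun p : ℤ × ℤ => (D1p (D2p u) p.1 p.2) ^ 2)

lemma lw_tsum_pm (u : ℤ → ℤ → ℝ) :
    ∑' p : ℤ × ℤ, (D1p (D2m u) p.1 p.2) ^ 2 = sqZ (D1p (D2p u)) := by
  have h : ∀ p : ℤ × ℤ, (D1p (D2m u) p.1 p.2) ^ 2 = (D1p (D2p u) p.1 (p.2-1)) ^ 2 :=
    fun p => by rw [lw_pm_eq]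
  rw [tsum_congr h]
  exact (Equiv.prodCongr (Equiv.refl ℤ) (Equiv.subRight (1:ℤ))).tsum_eq
    (fun p : ℤ × ℤ => (D1p (D2p u) p.1 p.2) ^ 2)

lemma lw_tsum_mp (u : ℤ → ℤ → ℝ) :
    ∑' p : ℤ × ℤ, (D1m (D2p u) p.1 p.2) ^ 2 = sqZ (D1p (D2p u)) := by
  have h : ∀ p : ℤ × ℤ, (D1m (D2p u) p.1 p.2) ^ 2 = (D1p (D2p u) (p.1-1) p.2) ^ 2 :=
    fun p => by rw [lw_mp_eq]
  rw [tsum_congr h]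
  exact (Equiv.prodCongr (Equiv.subRight (1:ℤ)) (Equiv.refl ℤ)).tsum_eq
    (fun p : ℤ × ℤ => (D1p (D2p u) p.1 p.2) ^ 2)

end Aux

/-- Proposition 1: the bound on `4‖w‖²` in ℓ²(ℤ²). -/
theorem lax_wendroff_prop1 (α β : ℝ) (u : ℤ → ℤ → ℝ)
    (hu : Summable fun p : ℤ × ℤ => (u p.1 p.2) ^ 2) :
    4 * sqZ (wop α β u) ≤
      2 * (α ^ 2 + β ^ 2) *
        (α ^ 2 * sqZ (L1 u) + β ^ 2 * sqZ (L2 u)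
          + (α ^ 2 + β ^ 2) * sqZ (D1p (D2p u))) := by
  set c1 : ℝ := 2*(α^2+β^2)*α^2 with hc1
  set c2 : ℝ := 2*(α^2+β^2)*β^2 with hc2
  set c3 : ℝ := (α^2+β^2)*((α-β)^2/2) with hc3
  set c5 : ℝ := (α^2+β^2)*((α+β)^2/2) with hc5
  -- summability
  have hA : Summable fun p : ℤ × ℤ => (L1 u p.1 p.2) ^ 2 := lw_S2_D1p (lw_S2_D1m hu)
  have hB : Summable fun p : ℤ × ℤ => (L2 u p.1 p.2) ^ 2 := lw_S2_D2p (lw_S2_D2m hu)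
  have hPpp : Summable fun p : ℤ × ℤ => (D1p (D2p u) p.1 p.2) ^ 2 := lw_S2_D1p (lw_S2_D2p hu)
  have hPmm : Summable fun p : ℤ × ℤ => (D1m (D2m u) p.1 p.2) ^ 2 := lw_S2_D1m (lw_S2_D2m hu)
  have hPpm : Summable fun p : ℤ × ℤ => (D1p (D2m u) p.1 p.2) ^ 2 := lw_S2_D1p (lw_S2_D2m hu)
  have hPmp : Summable fun p : ℤ × ℤ => (D1m (D2p u) p.1 p.2) ^ 2 := lw_S2_D1m (lw_S2_D2p hu)
  have hwop : Summable fun p : ℤ × ℤ => (wop α β u p.1 p.2) ^ 2 := by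
    have h1 : Summable fun p : ℤ × ℤ => (D10 (D20 u) p.1 p.2) ^ 2 :=
      lw_S2_D10 (lw_S2_D20 hu)
    have h2 : Summable fun p : ℤ × ℤ => (L1 (L2 u) p.1 p.2) ^ 2 := lw_S2_D1p (lw_S2_D1m hB)
    exact (lw_S2combo (lw_S2combo (lw_S2combo hA hB (-(α^2/2)) (-(β^2/2))) h1 1 (-(α*β)))
      h2 1 ((α^2+β^2)/8)).congr fun p => by simp only [wop]; ring
  -- pointwise bound
  have key : ∀ p : ℤ × ℤ, 4 * (wop α β u p.1 p.2) ^ 2 ≤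
      c1 * (L1 u p.1 p.2)^2 + (c2 * (L2 u p.1 p.2)^2
      + (c3 * (D1p (D2p u) p.1 p.2)^2 + (c3 * (D1m (D2m u) p.1 p.2)^2
      + (c5 * (D1p (D2m u) p.1 p.2)^2 + c5 * (D1m (D2p u) p.1 p.2)^2)))) := by
    intro p
    rw [lw_wop_eq]
    exact lw_key α β (L1 u p.1 p.2) (L2 u p.1 p.2) (D1p (D2p u) p.1 p.2)
      (D1m (D2m u) p.1 p.2) (D1p (D2m u) p.1 p.2) (D1m (D2p u) p.1 p.2)
  -- sum it
  have hsum : 4 * sqZ (wop α β u) ≤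
      c1 * sqZ (L1 u) + (c2 * sqZ (L2 u)
      + (c3 * sqZ (D1p (D2p u)) + (c3 * (∑' p : ℤ × ℤ, (D1m (D2m u) p.1 p.2) ^ 2)
      + (c5 * (∑' p : ℤ × ℤ, (D1p (D2m u) p.1 p.2) ^ 2)
        + c5 * (∑' p : ℤ × ℤ, (D1m (D2p u) p.1 p.2) ^ 2))))) := by
    have hL : (4 : ℝ) * sqZ (wop α β u) = ∑' p : ℤ × ℤ, 4 * (wop α β u p.1 p.2) ^ 2 :=
      tsum_mul_left.symm
    rw [hL]
    have hstep := Summable.tsum_le_tsum key (hwop.mul_left 4)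
      ((hA.mul_left c1).add ((hB.mul_left c2).add ((hPpp.mul_left c3).add
        ((hPmm.mul_left c3).add ((hPpm.mul_left c5).add (hPmp.mul_left c5))))))
    refine hstep.trans_eq ?_
    rw [Summable.tsum_add (hA.mul_left c1) ((hB.mul_left c2).add ((hPpp.mul_left c3).add
        ((hPmm.mul_left c3).add ((hPpm.mul_left c5).add (hPmp.mul_left c5))))),
      Summable.tsum_add (hB.mul_left c2) ((hPpp.mul_left c3).add
        ((hPmm.mul_left c3).add ((hPpm.mul_left c5).add (hPmp.mul_left c5)))),
      Summable.tsum_add (hPpp.mul_left c3)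
        ((hPmm.mul_left c3).add ((hPpm.mul_left c5).add (hPmp.mul_left c5))),
      Summable.tsum_add (hPmm.mul_left c3) ((hPpm.mul_left c5).add (hPmp.mul_left c5)),
      Summable.tsum_add (hPpm.mul_left c5) (hPmp.mul_left c5),
      tsum_mul_left, tsum_mul_left, tsum_mul_left, tsum_mul_left, tsum_mul_left,
      tsum_mul_left]
    rfl
  rw [lw_tsum_mm, lw_tsum_pm, lw_tsum_mp] at hsum
  have hfin : c1 * sqZ (L1 u) + (c2 * sqZ (L2 u)
      + (c3 * sqZ (D1p (D2p u)) + (c3 * sqZ (D1p (D2p u))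
      + (c5 * sqZ (D1p (D2p u)) + c5 * sqZ (D1p (D2p u)))))) =
      2 * (α ^ 2 + β ^ 2) *
        (α ^ 2 * sqZ (L1 u) + β ^ 2 * sqZ (L2 u)
          + (α ^ 2 + β ^ 2) * sqZ (D1p (D2p u))) := by
    rw [hc1, hc2, hc3, hc5]; ring
  linarith [hsum, hfin.ge, hfin.le]
end
end

section
/- Let a < 0, b ∈ ℝ, λ > 0, μ > 0, and set α := λa, β := μb. Let u ∈ ℋ and define v := −α D₁,₀ u − β D₂,₀ u on the interior indices 𝓘. Then 2⟨u ; v⟩_{ℓ²(𝓘)} = −λ|a| · ∑_{k∈ℤ} (u_{0,k})². -/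
noncomputable section

/-!
Expanding the centred differences, `2⟨u, v⟩` is a combination of the four correlation sums
`∑ u_{j,k} u_{j±1,k}` and `∑ u_{j,k} u_{j,k±1}`. Shifting `k` identifies the two sums in the
second variable, so the `β`-part cancels. Shifting `j` identifies `∑ u_{j,k} u_{j-1,k}` with
`∑ u_{j,k} u_{j+1,k}` up to its `j = 0` row, which the extrapolation condition `u_{-1,k} = u_{0,k}`
turns into `∑_k u_{0,k}²`; hence `2⟨u, v⟩ = α ∑_k u_{0,k}²` for all real `α, β`, and `α = -λ|a|`.
-/

lemma Summable.mul_of_summable_sq {ι : Type*} {f g : ι → ℝ} (hf : Summable fun i => f i ^ 2)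
    (hg : Summable fun i => g i ^ 2) : Summable fun i => f i * g i := by
  refine Summable.of_norm_bounded ((hf.add hg).div_const 2) fun i => ?_
  rw [Real.norm_eq_abs, abs_mul, le_div_iff₀ two_pos, ← sq_abs (f i), ← sq_abs (g i)]
  linarith [two_mul_le_add_sq |f i| |g i|]

lemma HasSum.nat_prod_zero_add {β M : Type*} [AddCommMonoid M] [TopologicalSpace M]
    [ContinuousAdd M] {f : ℕ × β → M} {a b : M} (h₀ : HasSum (fun y => f (0, y)) a)
    (h₁ : HasSum (fun p : ℕ × β => f (p.1 + 1, p.2)) b) : HasSum f (a + b) := by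
  let e : β ⊕ ℕ × β ≃ ℕ × β :=
    { toFun := Sum.elim (fun y => (0, y)) fun p => (p.1 + 1, p.2)
      invFun := fun p => Nat.casesOn p.1 (Sum.inl p.2) fun n => Sum.inr (n, p.2)
      left_inv := by rintro (_ | _) <;> rfl
      right_inv := by rintro ⟨_ | _, _⟩ <;> rfl }
  exact e.hasSum_iff.mp (h₀.sum h₁)

section HalfSpace

variable {u : ℤ → ℤ → ℝ}

lemma summable_sq_shift (hs : Summable fun p : ℕ × ℤ => u p.1 p.2 ^ 2) (m : ℕ) (n : ℤ) :
    Summable fun p : ℕ × ℤ => u (p.1 + m) (p.2 + n) ^ 2 := by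
  have hinj : Function.Injective fun p : ℕ × ℤ => (p.1 + m, p.2 + n) := fun p q h => by
    simp only [Prod.mk.injEq, add_left_inj] at h
    exact Prod.ext h.1 h.2
  simpa [Function.comp_def] using hs.comp_injective hinj

lemma summable_mul_succ_fst (hs : Summable fun p : ℕ × ℤ => u p.1 p.2 ^ 2) :
    Summable fun p : ℕ × ℤ => u p.1 p.2 * u (p.1 + 1) p.2 :=
  hs.mul_of_summable_sq (by simpa using summable_sq_shift hs 1 0)

lemma summable_mul_succ_snd (hs : Summable fun p : ℕ × ℤ => u p.1 p.2 ^ 2) :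
    Summable fun p : ℕ × ℤ => u p.1 p.2 * u p.1 (p.2 + 1) :=
  hs.mul_of_summable_sq (by simpa using summable_sq_shift hs 0 1)

lemma hasSum_mul_pred_snd (hs : Summable fun p : ℕ × ℤ => u p.1 p.2 ^ 2) :
    HasSum (fun p : ℕ × ℤ => u p.1 p.2 * u p.1 (p.2 - 1))
      (∑' p : ℕ × ℤ, u p.1 p.2 * u p.1 (p.2 + 1)) := by
  rw [← ((Equiv.refl ℕ).prodCongr (Equiv.addRight (1 : ℤ))).hasSum_iff]
  convert (summable_mul_succ_snd hs).hasSum using 2 with p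
  simp [mul_comm]

lemma hasSum_mul_pred_fst (hu : memH u) :
    HasSum (fun p : ℕ × ℤ => u p.1 p.2 * u (p.1 - 1) p.2)
      (∑' k : ℤ, u 0 k ^ 2 + ∑' p : ℕ × ℤ, u p.1 p.2 * u (p.1 + 1) p.2) := by
  obtain ⟨hbdry, hs⟩ := hu
  refine HasSum.nat_prod_zero_add ?_ ?_
  · simpa [hbdry, ← sq] using (hs.prod_factor 0).hasSum
  · convert (summable_mul_succ_fst hs).hasSum using 2 with p
    push_cast
    rw [add_sub_cancel_right, mul_comm]

theorem two_mul_ipH_vop (α β : ℝ) (hu : memH u) :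
    2 * ipH u (vop α β u) = α * ∑' k : ℤ, u 0 k ^ 2 := by
  have hs := hu.2
  have hsum :=
    (((summable_mul_succ_fst hs).hasSum.sub (hasSum_mul_pred_fst hu)).mul_left (-α)).sub
      (((summable_mul_succ_snd hs).hasSum.sub (hasSum_mul_pred_snd hs)).mul_left β)
  rw [ipH, ← tsum_mul_left]
  convert hsum.tsum_eq using 1
  · congr 1 with p
    simp only [vop, D10, D20, D1p, D1m, D2p, D2m]
    ring
  · ring

end HalfSpace

theorem halfspace_uv_boundary_general (a b lam mu : ℝ) (ha : a < 0)
    (u : ℤ → ℤ → ℝ) (hu : memH u) :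
    2 * ipH u (vop (lam * a) (mu * b) u) = -(lam * |a|) * ∑' k : ℤ, (u 0 k) ^ 2 := by
  rw [two_mul_ipH_vop _ _ hu, abs_of_neg ha]
  ring

/-- Lemma 4 (i): boundary term produced by the skew-selfadjoint part in the half-space. -/
theorem halfspace_uv_boundary (a b lam mu : ℝ) (ha : a < 0) (hlam : 0 < lam) (hmu : 0 < mu)
    (u : ℤ → ℤ → ℝ) (hu : memH u) :
    2 * ipH u (vop (lam * a) (mu * b) u) = -(lam * |a|) * ∑' k : ℤ, (u 0 k) ^ 2 :=
  halfspace_uv_boundary_general a b lam mu ha u hu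
end
end

section
/- Let u ∈ ℋ and α, β ∈ ℝ, and define B₁ := ((α²+β²)/2)‖D₂₊ Δ₁ u‖²_{ℓ²(𝓘)} + 4αβ ⟨D₁,₀ D₂,₀ u ; Δ₁ u⟩_{ℓ²(𝓘)}. Then B₁ ≤ (α²+β²)·( ‖Δ₁ u‖²_{ℓ²(𝓘)} + ‖D₁₊ D₂₊ u‖²_{ℓ²(𝓘)} ). -/
noncomputable section

/-!
Extend `u` to all of `ℤ²` by `u j k := u 0 k` for `j < 0`. Thanks to the extrapolation
condition this changes none of the difference operators at interior points, and makes all of them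
vanish for `j < 0`, so the half-space sums become sums over `ℤ²`. There every quantity is a
quadratic form in `w = D₁₊ u`, i.e. a combination of the autocorrelations
`c a = ∑ₓ w x * w (x + a)`, and the right-hand side minus `B₁` is
`(α - β)² (c 0 - c (1, 1)) + (α + β)² (c 0 - c (1, -1)) ≥ 0`.
-/

lemma summable_mul_of_summable_sq {α : Type*} {f g : α → ℝ} (hf : Summable fun x => f x ^ 2)
    (hg : Summable fun x => g x ^ 2) : Summable fun x => f x * g x :=
  (hf.add hg).of_norm_bounded fun x => by
    rw [Real.norm_eq_abs, abs_mul]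
    nlinarith [two_mul_le_add_sq |f x| |g x|, sq_abs (f x), sq_abs (g x)]

lemma summable_sq_sub {α : Type*} {f g : α → ℝ} (hf : Summable fun x => f x ^ 2)
    (hg : Summable fun x => g x ^ 2) : Summable fun x => (f x - g x) ^ 2 :=
  ((hf.add hg).mul_left 2).of_nonneg_of_le (fun x => sq_nonneg _) fun x => by
    nlinarith [sq_nonneg (f x + g x)]

section Autocorrelation

variable {G : Type*} [AddCommGroup G]

def autocorr (w : G → ℝ) (a : G) : ℝ := ∑' x, w x * w (x + a)

lemma tsum_mul_add_eq_autocorr (w : G → ℝ) (a b : G) :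
    ∑' x, w (x + a) * w (x + b) = autocorr w (b - a) := by
  rw [autocorr, ← (Equiv.addRight a).tsum_eq (fun x => w x * w (x + (b - a)))]
  simp [add_assoc]

lemma autocorr_neg (w : G → ℝ) (a : G) : autocorr w (-a) = autocorr w a := by
  rw [← zero_sub, ← tsum_mul_add_eq_autocorr, autocorr]
  simp [mul_comm]

def stencil {ι : Type*} [Fintype ι] (c : ι → ℝ) (a : ι → G) (w : G → ℝ) (x : G) : ℝ :=
  ∑ i, c i * w (x + a i)

lemma tsum_stencil_mul_stencil {ι κ : Type*} [Fintype ι] [Fintype κ] {w : G → ℝ}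
    (hw : Summable fun x => w x ^ 2) (c : ι → ℝ) (a : ι → G) (d : κ → ℝ) (b : κ → G) :
    ∑' x, stencil c a w x * stencil d b w x = ∑ i, ∑ j, c i * d j * autocorr w (b j - a i) := by
  have hshift (a : G) : Summable fun x => w (x + a) ^ 2 :=
    (Equiv.addRight a).summable_iff (f := fun x => w x ^ 2) |>.mpr hw
  have hterm (i : ι) (j : κ) : Summable fun x => c i * d j * (w (x + a i) * w (x + b j)) :=
    (summable_mul_of_summable_sq (hshift (a i)) (hshift (b j))).mul_left _
  calc ∑' x, stencil c a w x * stencil d b w x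
      = ∑' x, ∑ i, ∑ j, c i * d j * (w (x + a i) * w (x + b j)) :=
        tsum_congr fun x => by
          simp only [stencil, Finset.sum_mul_sum]
          exact Finset.sum_congr rfl fun i _ => Finset.sum_congr rfl fun j _ => by ring
    _ = ∑ i, ∑ j, ∑' x, c i * d j * (w (x + a i) * w (x + b j)) := by
        rw [Summable.tsum_finsetSum fun i _ => summable_sum fun j _ => hterm i j]
        exact Finset.sum_congr rfl fun i _ => Summable.tsum_finsetSum fun j _ => hterm i j
    _ = _ := by simp only [tsum_mul_left, tsum_mul_add_eq_autocorr]

lemma autocorr_le_autocorr_zero {w : G → ℝ} (hw : Summable fun x => w x ^ 2) (a : G) :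
    autocorr w a ≤ autocorr w 0 := by
  have h := tsum_stencil_mul_stencil hw ![1, -1] ![0, a] ![1, -1] ![0, a]
  simp only [Fin.sum_univ_two, Matrix.cons_val_zero, Matrix.cons_val_one, sub_self, sub_zero,
    zero_sub, autocorr_neg] at h
  have : 0 ≤ ∑' x, stencil ![1, -1] ![0, a] w x * stencil ![1, -1] ![0, a] w x :=
    tsum_nonneg fun x => mul_self_nonneg _
  linarith

end Autocorrelation

section WholeSpace

variable {u : ℤ → ℤ → ℝ} {w : ℤ × ℤ → ℝ} {ι κ : Type*} [Fintype ι] [Fintype κ]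
  {c : ι → ℝ} {a : ι → ℤ × ℤ} {d : κ → ℝ} {b : κ → ℤ × ℤ}

lemma sqZ_eq_tsum_stencil {v : ℤ → ℤ → ℝ} (hv : ∀ j k, v j k = stencil c a w (j, k)) :
    sqZ v = ∑' x, stencil c a w x * stencil c a w x :=
  tsum_congr fun x => by rw [sq, hv]

lemma ipZ_eq_tsum_stencil {v v' : ℤ → ℤ → ℝ} (hv : ∀ j k, v j k = stencil c a w (j, k))
    (hv' : ∀ j k, v' j k = stencil d b w (j, k)) :
    ipZ v v' = ∑' x, stencil c a w x * stencil d b w x :=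
  tsum_congr fun x => by rw [hv, hv']

lemma L1_eq_stencil (j k : ℤ) :
    L1 u j k = stencil ![1, -1] ![0, (-1, 0)] (fun x => D1p u x.1 x.2) (j, k) := by
  simp only [stencil, Fin.sum_univ_succ, Fin.sum_univ_zero, Matrix.cons_val_zero,
    Matrix.cons_val_succ, Prod.mk_add_mk, add_zero, L1, D1p, D1m]
  ring_nf

lemma D2p_L1_eq_stencil (j k : ℤ) :
    D2p (L1 u) j k =
      stencil ![1, -1, -1, 1] ![(0, 1), (-1, 1), 0, (-1, 0)] (fun x => D1p u x.1 x.2) (j, k) := by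
  simp only [stencil, Fin.sum_univ_succ, Fin.sum_univ_zero, Matrix.cons_val_zero,
    Matrix.cons_val_succ, Prod.mk_add_mk, add_zero, L1, D1p, D1m, D2p]
  ring_nf

lemma D1p_D2p_eq_stencil (j k : ℤ) :
    D1p (D2p u) j k = stencil ![1, -1] ![(0, 1), 0] (fun x => D1p u x.1 x.2) (j, k) := by
  simp only [stencil, Fin.sum_univ_succ, Fin.sum_univ_zero, Matrix.cons_val_zero,
    Matrix.cons_val_succ, Prod.mk_add_mk, add_zero, D1p, D2p]
  ring_nf

lemma D10_D20_eq_stencil (j k : ℤ) :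
    D10 (D20 u) j k = stencil ![1 / 4, 1 / 4, -1 / 4, -1 / 4]
      ![(0, 1), (-1, 1), (0, -1), (-1, -1)] (fun x => D1p u x.1 x.2) (j, k) := by
  simp only [stencil, Fin.sum_univ_succ, Fin.sum_univ_zero, Matrix.cons_val_zero,
    Matrix.cons_val_succ, Prod.mk_add_mk, add_zero, D10, D20, D1p, D2p, D1m, D2m]
  ring_nf

end WholeSpace

theorem wholespace_lemma7 (α β : ℝ) (u : ℤ → ℤ → ℝ)
    (hu : Summable fun x : ℤ × ℤ => D1p u x.1 x.2 ^ 2) :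
    ((α ^ 2 + β ^ 2) / 2) * sqZ (D2p (L1 u)) + 4 * α * β * ipZ (D10 (D20 u)) (L1 u) ≤
      (α ^ 2 + β ^ 2) * (sqZ (L1 u) + sqZ (D1p (D2p u))) := by
  rw [sqZ_eq_tsum_stencil D2p_L1_eq_stencil, ipZ_eq_tsum_stencil D10_D20_eq_stencil L1_eq_stencil,
    sqZ_eq_tsum_stencil L1_eq_stencil, sqZ_eq_tsum_stencil D1p_D2p_eq_stencil]
  set w : ℤ × ℤ → ℝ := fun x => D1p u x.1 x.2
  have hw : Summable fun x => w x ^ 2 := hu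
  have h10 := autocorr_neg w (1, 0)
  have h01 := autocorr_neg w (0, 1)
  have h11 := autocorr_neg w (1, 1)
  have h1m := autocorr_neg w (1, -1)
  simp only [Prod.neg_mk, neg_neg, neg_zero] at h10 h01 h11 h1m
  simp only [tsum_stencil_mul_stencil hw, Fin.sum_univ_two, Fin.sum_univ_four, Matrix.cons_val,
    Matrix.cons_val_zero, Matrix.cons_val_one, Matrix.cons_val_fin_one, Prod.mk_sub_mk, sub_zero,
    zero_sub, sub_self, Prod.neg_mk, Int.reduceNeg, neg_zero, h10, h01, h11, h1m]
  linear_combination (α - β) ^ 2 * autocorr_le_autocorr_zero hw (1, 1) +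
    (α + β) ^ 2 * autocorr_le_autocorr_zero hw (1, -1)

lemma tsum_nat_prod_eq_tsum {β M : Type*} [AddCommMonoid M] [TopologicalSpace M] {f : ℤ × β → M}
    (hf : ∀ x : ℤ × β, x.1 < 0 → f x = 0) : ∑' p : ℕ × β, f (p.1, p.2) = ∑' x, f x := by
  refine Function.Injective.tsum_eq (g := Prod.map Nat.cast id)
    (Nat.cast_injective.prodMap Function.injective_id) fun x hx => ?_
  have : 0 ≤ x.1 := not_lt.mp fun h => hx (hf x h)
  exact ⟨(x.1.toNat, x.2), by simp [this]⟩

lemma summable_nat_prod_iff {β M : Type*} [AddCommMonoid M] [TopologicalSpace M] {f : ℤ × β → M}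
    (hf : ∀ x : ℤ × β, x.1 < 0 → f x = 0) :
    Summable (fun p : ℕ × β => f (p.1, p.2)) ↔ Summable f := by
  refine Function.Injective.summable_iff (g := Prod.map Nat.cast id)
    (Nat.cast_injective.prodMap Function.injective_id) fun x hx => ?_
  by_contra h
  exact hx ⟨(x.1.toNat, x.2), by simp [not_lt.mp fun h' => h (hf x h')]⟩

lemma sqH_eq_sqZ {v v' : ℤ → ℤ → ℝ} (h : ∀ {j : ℤ}, 0 ≤ j → ∀ k, v' j k = v j k)
    (h0 : ∀ {j : ℤ}, j < 0 → ∀ k, v' j k = 0) : sqH v = sqZ v' := by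
  rw [sqH, sqZ, ← tsum_nat_prod_eq_tsum fun x hx => by simp [h0 hx]]
  exact tsum_congr fun p => by rw [h p.1.cast_nonneg]

lemma ipH_eq_ipZ {v v' w w' : ℤ → ℤ → ℝ} (hv : ∀ {j : ℤ}, 0 ≤ j → ∀ k, v' j k = v j k)
    (hw : ∀ {j : ℤ}, 0 ≤ j → ∀ k, w' j k = w j k) (h0 : ∀ {j : ℤ}, j < 0 → ∀ k, w' j k = 0) :
    ipH v w = ipZ v' w' := by
  rw [ipH, ipZ, ← tsum_nat_prod_eq_tsum fun x hx => by simp [h0 hx]]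
  exact tsum_congr fun p => by rw [hv p.1.cast_nonneg, hw p.1.cast_nonneg]

section ConstExtension

def constExtension (u : ℤ → ℤ → ℝ) : ℤ → ℤ → ℝ := fun j k => u (max j 0) k

variable {u : ℤ → ℤ → ℝ} {j : ℤ}

lemma constExtension_of_nonpos (hj : j ≤ 0) (k : ℤ) : constExtension u j k = u 0 k := by
  rw [constExtension, max_eq_right hj]

lemma constExtension_of_neg_one_le (hbc : ∀ k, u (-1) k = u 0 k) (hj : -1 ≤ j) (k : ℤ) :
    constExtension u j k = u j k := by
  rcases hj.eq_or_lt with rfl | hj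
  · rw [constExtension_of_nonpos (by norm_num), hbc]
  · rw [constExtension, max_eq_left (by omega)]

lemma D1p_constExtension (hbc : ∀ k, u (-1) k = u 0 k) (hj : 0 ≤ j) (k : ℤ) :
    D1p (constExtension u) j k = D1p u j k := by
  simp (disch := omega) only [D1p, constExtension_of_neg_one_le hbc]

lemma L1_constExtension (hbc : ∀ k, u (-1) k = u 0 k) (hj : 0 ≤ j) (k : ℤ) :
    L1 (constExtension u) j k = L1 u j k := by
  simp (disch := omega) only [L1, D1p, D1m, constExtension_of_neg_one_le hbc]

lemma D2p_L1_constExtension (hbc : ∀ k, u (-1) k = u 0 k) (hj : 0 ≤ j) (k : ℤ) :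
    D2p (L1 (constExtension u)) j k = D2p (L1 u) j k := by
  simp (disch := omega) only [D2p, L1, D1p, D1m, constExtension_of_neg_one_le hbc]

lemma D1p_D2p_constExtension (hbc : ∀ k, u (-1) k = u 0 k) (hj : 0 ≤ j) (k : ℤ) :
    D1p (D2p (constExtension u)) j k = D1p (D2p u) j k := by
  simp (disch := omega) only [D1p, D2p, constExtension_of_neg_one_le hbc]

lemma D10_D20_constExtension (hbc : ∀ k, u (-1) k = u 0 k) (hj : 0 ≤ j) (k : ℤ) :
    D10 (D20 (constExtension u)) j k = D10 (D20 u) j k := by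
  simp (disch := omega) only [D10, D20, D1p, D1m, D2p, D2m, constExtension_of_neg_one_le hbc]

lemma D1p_constExtension_of_neg (hj : j < 0) (k : ℤ) : D1p (constExtension u) j k = 0 := by
  simp (disch := omega) only [D1p, constExtension_of_nonpos, sub_self]

lemma L1_constExtension_of_neg (hj : j < 0) (k : ℤ) : L1 (constExtension u) j k = 0 := by
  simp (disch := omega) only [L1, D1p, D1m, constExtension_of_nonpos, sub_self]

lemma D2p_L1_constExtension_of_neg (hj : j < 0) (k : ℤ) :
    D2p (L1 (constExtension u)) j k = 0 := by
  simp (disch := omega) only [D2p, L1, D1p, D1m, constExtension_of_nonpos, sub_self]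

lemma D1p_D2p_constExtension_of_neg (hj : j < 0) (k : ℤ) :
    D1p (D2p (constExtension u)) j k = 0 := by
  simp (disch := omega) only [D1p, D2p, constExtension_of_nonpos, sub_self]

lemma summable_sq_D1p_constExtension (hu : memH u) :
    Summable fun x : ℤ × ℤ => D1p (constExtension u) x.1 x.2 ^ 2 := by
  obtain ⟨hbc, hsum⟩ := hu
  rw [← summable_nat_prod_iff fun x hx => by simp [D1p_constExtension_of_neg hx]]
  have hsucc := hsum.comp_injective (Nat.succ_injective.prodMap Function.injective_id)
  refine (summable_sq_sub hsucc hsum).congr fun p => ?_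
  dsimp only
  rw [D1p_constExtension hbc p.1.cast_nonneg]
  simp [D1p]

end ConstExtension

/-- Lemma 7: bound on the quantity `B₁` in the half-space. -/
theorem halfspace_lemma7 (α β : ℝ) (u : ℤ → ℤ → ℝ) (hu : memH u) :
    ((α ^ 2 + β ^ 2) / 2) * sqH (D2p (L1 u))
        + 4 * α * β * ipH (D10 (D20 u)) (L1 u) ≤
      (α ^ 2 + β ^ 2) * (sqH (L1 u) + sqH (D1p (D2p u))) := by
  have hbc := hu.1
  rw [sqH_eq_sqZ (D2p_L1_constExtension hbc) D2p_L1_constExtension_of_neg,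
    ipH_eq_ipZ (D10_D20_constExtension hbc) (L1_constExtension hbc) L1_constExtension_of_neg,
    sqH_eq_sqZ (L1_constExtension hbc) L1_constExtension_of_neg,
    sqH_eq_sqZ (D1p_D2p_constExtension hbc) D1p_D2p_constExtension_of_neg]
  exact wholespace_lemma7 α β _ (summable_sq_D1p_constExtension hu)
end
end

section
/- Let u ∈ ℋ and α, β ∈ ℝ, and define B₂ := ((α²+β²)/2)‖D₁₊ Δ₂ u‖²_{ℓ²(𝓘)} + 4αβ ⟨D₁,₀ D₂,₀ u ; Δ₂ u⟩_{ℓ²(𝓘)}. Then B₂ ≤ (α²+β²)·( ‖Δ₂ u‖²_{ℓ²(𝓘)} + ‖D₁₊ D₂₊ u‖²_{ℓ²(𝓘)} ) − ((α²+β²)/2)·∑_{k∈ℤ} ((Δ₂ u)_{0,k})². -/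
noncomputable section

/-! Write `W = Δ₂u`, `P = D₂₊D₁₊u` and `M = D₂₋D₁₊u`, all square-summable on `𝓘`, so that
`D₁₊W = P - M`. Telescoping `‖W(· + 1, ·)‖² = ‖W‖² - ∑ₖ W(0,k)²` gives
`∑ₖ W(0,k)² + ‖D₁₊W‖² + 2⟨W, P - M⟩ = 0`. The extrapolation condition makes `D₁₊D₂,₀u` vanish at
`j = -1`, so summation by parts in `j` has no boundary term and yields
`⟨D₁,₀D₂,₀u, W⟩ = ⟨(P + M)/2, W⟩`, the correction `⟨D₂,₀D₁₊u, Δ₂D₁₊u⟩ = (‖P‖² - ‖M‖²)/2`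
vanishing by shift invariance in `k`. With `‖M‖ = ‖P‖` the right-hand side minus the left-hand side
is then `((α - β)²/2)‖W + P‖² + ((α + β)²/2)‖W - M‖² ≥ 0`. -/

open Function
open scoped RealInnerProductSpace

theorem memℓp_two_iff_summable_sq {ι : Type*} {f : ι → ℝ} :
    Memℓp f 2 ↔ Summable fun i => f i ^ 2 := by
  rw [memℓp_gen_iff (by norm_num)]
  simp [Real.norm_eq_abs, sq_abs]

section SuccFst
variable {β E : Type*}

theorem injective_succ_fst : Injective fun p : ℕ × β => (p.1 + 1, p.2) := fun p q h => by
  simp only [Prod.mk.injEq, add_left_inj] at h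
  exact Prod.ext h.1 h.2

theorem tsum_prod_nat_eq_zero_add [AddCommGroup E] [UniformSpace E] [IsUniformAddGroup E]
    [CompleteSpace E] [T2Space E] {F : ℕ × β → E} (hF : Summable F) :
    ∑' p, F p = ∑' b, F (0, b) + ∑' p : ℕ × β, F (p.1 + 1, p.2) := by
  have hsucc : Summable fun p : ℕ × β => F (p.1 + 1, p.2) := hF.comp_injective injective_succ_fst
  rw [hF.tsum_prod, hF.prod.tsum_eq_zero_add, hsucc.tsum_prod]

theorem hasSum_of_hasSum_succ_fst [AddCommMonoid E] [TopologicalSpace E] {F : ℕ × β → E}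
    (h0 : ∀ b, F (0, b) = 0) {a : E} (h : HasSum (fun p : ℕ × β => F (p.1 + 1, p.2)) a) :
    HasSum F a := by
  refine (injective_succ_fst.hasSum_iff ?_).mp h
  rintro ⟨_ | j, b⟩ hp
  · exact h0 b
  · exact absurd ⟨(j, b), rfl⟩ hp

end SuccFst

theorem two_mul_mul_inner_add_sub_inner_sub_le {E : Type*} [NormedAddCommGroup E]
    [InnerProductSpace ℝ E] (α β : ℝ) {w p m : E} (hm : ‖m‖ = ‖p‖) :
    2 * α * β * ⟪p + m, w⟫ - (α ^ 2 + β ^ 2) * ⟪w, p - m⟫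
      ≤ (α ^ 2 + β ^ 2) * (‖w‖ ^ 2 + ‖p‖ ^ 2) := by
  have hsq : 0 ≤ (α - β) ^ 2 / 2 * ‖w + p‖ ^ 2 + (α + β) ^ 2 / 2 * ‖w - m‖ ^ 2 := by positivity
  rw [norm_add_sq_real, norm_sub_sq_real, hm] at hsq
  rw [inner_add_left, inner_sub_right, real_inner_comm w p, real_inner_comm w m]
  linear_combination hsq

section DifferenceOperators
variable (u : ℤ → ℤ → ℝ)

theorem D1p_D2p : D1p (D2p u) = D2p (D1p u) := by
  funext j k; simp only [D1p, D2p]; ring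

theorem D1p_D20 : D1p (D20 u) = D20 (D1p u) := by
  funext j k; simp only [D1p, D20, D2p, D2m]; ring

theorem D1p_L2 : D1p (L2 u) = L2 (D1p u) := by
  funext j k; simp only [D1p, L2, D2p, D2m]; ring

variable {u}

theorem D20_neg_one (hb : ∀ k, u (-1) k = u 0 k) (k : ℤ) : D20 u (-1) k = D20 u 0 k := by
  simp only [D20, D2p, D2m, hb]

end DifferenceOperators

def restrictH (v : ℤ → ℤ → ℝ) : ℕ × ℤ → ℝ := fun p => v p.1 p.2

def toL2 (v : ℤ → ℤ → ℝ) (hv : Memℓp (restrictH v) 2) : lp (fun _ : ℕ × ℤ => ℝ) 2 :=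
  ⟨restrictH v, hv⟩

section HalfSpace
variable {v w : ℤ → ℤ → ℝ}

@[simp] theorem toL2_apply (hv : Memℓp (restrictH v) 2) (p : ℕ × ℤ) :
    toL2 v hv p = v p.1 p.2 := rfl

theorem sqH_eq_norm_sq (hv : Memℓp (restrictH v) 2) : sqH v = ‖toL2 v hv‖ ^ 2 := by
  rw [← real_inner_self_eq_norm_sq, lp.inner_eq_tsum]
  simp [sqH, sq]

theorem ipH_eq_inner (hv : Memℓp (restrictH v) 2) (hw : Memℓp (restrictH w) 2) :
    ipH v w = ⟪toL2 v hv, toL2 w hw⟫ := by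
  rw [lp.inner_eq_tsum]
  simp [ipH, mul_comm]

theorem hasSum_ipH (hv : Memℓp (restrictH v) 2) (hw : Memℓp (restrictH w) 2) :
    HasSum (fun p : ℕ × ℤ => v p.1 p.2 * w p.1 p.2) (ipH v w) := by
  rw [ipH_eq_inner hv hw]
  simpa [mul_comm] using lp.hasSum_inner (𝕜 := ℝ) (toL2 v hv) (toL2 w hw)

theorem Memℓp.restrictH_comp_injective (hv : Memℓp (restrictH v) 2) {e : ℕ × ℤ → ℕ × ℤ}
    (he : Injective e) : Memℓp (restrictH v ∘ e) 2 := by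
  rw [memℓp_two_iff_summable_sq] at hv ⊢
  exact hv.comp_injective he

theorem Memℓp.restrictH_succ (hv : Memℓp (restrictH v) 2) :
    Memℓp (restrictH fun j k => v (j + 1) k) 2 :=
  hv.restrictH_comp_injective (e := fun p => (p.1 + 1, p.2)) injective_succ_fst

theorem Memℓp.restrictH_shift_snd (hv : Memℓp (restrictH v) 2) (b : ℤ) :
    Memℓp (restrictH fun j k => v j (k + b)) 2 :=
  hv.restrictH_comp_injective (e := fun p => (p.1, p.2 + b)) fun p q h => by
    simp only [Prod.mk.injEq, add_left_inj] at h
    exact Prod.ext h.1 h.2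

theorem Memℓp.restrictH_D1p (hv : Memℓp (restrictH v) 2) : Memℓp (restrictH (D1p v)) 2 :=
  hv.restrictH_succ.sub hv

theorem Memℓp.restrictH_D2p (hv : Memℓp (restrictH v) 2) : Memℓp (restrictH (D2p v)) 2 :=
  (hv.restrictH_shift_snd 1).sub hv

theorem Memℓp.restrictH_D2m (hv : Memℓp (restrictH v) 2) : Memℓp (restrictH (D2m v)) 2 := by
  have h := hv.sub (hv.restrictH_shift_snd (-1))
  simp only [← sub_eq_add_neg] at h
  exact h

theorem Memℓp.restrictH_L2 (hv : Memℓp (restrictH v) 2) : Memℓp (restrictH (L2 v)) 2 :=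
  hv.restrictH_D2m.restrictH_D2p

theorem Memℓp.restrictH_D20 (hv : Memℓp (restrictH v) 2) : Memℓp (restrictH (D20 v)) 2 := by
  have h : restrictH (D20 v) = (2⁻¹ : ℝ) • (restrictH (D2p v) + restrictH (D2m v)) := by
    funext p
    simp only [restrictH, D20, Pi.smul_apply, Pi.add_apply, smul_eq_mul]
    ring
  rw [h]
  exact (hv.restrictH_D2p.add hv.restrictH_D2m).const_smul _

theorem sqH_D2m_eq_sqH_D2p (v : ℤ → ℤ → ℝ) : sqH (D2m v) = sqH (D2p v) := by
  rw [sqH, sqH, ← ((Equiv.refl ℕ).prodCongr (Equiv.addRight 1)).tsum_eq]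
  refine tsum_congr fun p => ?_
  simp [D2p, D2m]

theorem norm_toL2_D2m (hv : Memℓp (restrictH v) 2) :
    ‖toL2 (D2m v) hv.restrictH_D2m‖ = ‖toL2 (D2p v) hv.restrictH_D2p‖ := by
  have h := sqH_D2m_eq_sqH_D2p v
  rwa [sqH_eq_norm_sq hv.restrictH_D2m, sqH_eq_norm_sq hv.restrictH_D2p,
    sq_eq_sq₀ (norm_nonneg _) (norm_nonneg _)] at h

theorem toL2_L2 (hv : Memℓp (restrictH v) 2) (h : Memℓp (restrictH (L2 v)) 2) :
    toL2 (L2 v) h = toL2 (D2p v) hv.restrictH_D2p - toL2 (D2m v) hv.restrictH_D2m :=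
  lp.ext <| funext fun p => by
    simp only [toL2_apply, lp.coeFn_sub, Pi.sub_apply, L2, D2p, D2m, add_sub_cancel_right]

theorem toL2_D20 (hv : Memℓp (restrictH v) 2) (h : Memℓp (restrictH (D20 v)) 2) :
    toL2 (D20 v) h
      = (2⁻¹ : ℝ) • (toL2 (D2p v) hv.restrictH_D2p + toL2 (D2m v) hv.restrictH_D2m) :=
  lp.ext <| funext fun p => by
    simp only [toL2_apply, lp.coeFn_smul, lp.coeFn_add, Pi.smul_apply, Pi.add_apply,
      smul_eq_mul, D20]
    ring

theorem ipH_D20_L2_eq_zero (hv : Memℓp (restrictH v) 2) : ipH (D20 v) (L2 v) = 0 := by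
  rw [ipH_eq_inner hv.restrictH_D20 hv.restrictH_L2, toL2_D20 hv, toL2_L2 hv,
    real_inner_smul_left, inner_add_left, inner_sub_right, inner_sub_right,
    real_inner_self_eq_norm_sq, real_inner_self_eq_norm_sq, real_inner_comm, norm_toL2_D2m hv]
  ring

theorem tsum_sq_zero_add_sqH_D1p_add_ipH_eq_zero (hv : Memℓp (restrictH v) 2) :
    ∑' k, v 0 k ^ 2 + sqH (D1p v) + 2 * ipH v (D1p v) = 0 := by
  have hsplit : sqH v = ∑' k, v 0 k ^ 2 + sqH fun j k => v (j + 1) k :=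
    tsum_prod_nat_eq_zero_add (memℓp_two_iff_summable_sq.mp hv)
  have hshift : toL2 (fun j k => v (j + 1) k) hv.restrictH_succ
      = toL2 v hv + toL2 (D1p v) hv.restrictH_D1p :=
    lp.ext <| funext fun p => by simp [D1p]
  rw [sqH_eq_norm_sq hv, sqH_eq_norm_sq hv.restrictH_succ, hshift, norm_add_sq_real] at hsplit
  rw [sqH_eq_norm_sq hv.restrictH_D1p, ipH_eq_inner hv hv.restrictH_D1p]
  linarith

theorem ipH_D10_eq (hb : ∀ k, v (-1) k = v 0 k) (hv : Memℓp (restrictH v) 2)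
    (hw : Memℓp (restrictH w) 2) :
    ipH (D10 v) w = ipH (D1p v) w + ipH (D1p v) (D1p w) / 2 := by
  have hlag : HasSum (fun p : ℕ × ℤ => D1p v (p.1 - 1) p.2 * w p.1 p.2)
      (ipH (D1p v) w + ipH (D1p v) (D1p w)) := by
    refine hasSum_of_hasSum_succ_fst (fun k => by simp [D1p, hb]) ?_
    convert (hasSum_ipH hv.restrictH_D1p hw).add (hasSum_ipH hv.restrictH_D1p hw.restrictH_D1p)
      using 1
    funext p
    simp only [Nat.cast_add, Nat.cast_one, add_sub_cancel_right, D1p]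
    ring
  have hsum := ((hasSum_ipH hv.restrictH_D1p hw).add hlag).div_const 2
  rw [show ipH (D1p v) w + ipH (D1p v) (D1p w) / 2
      = (ipH (D1p v) w + (ipH (D1p v) w + ipH (D1p v) (D1p w))) / 2 by ring, ← hsum.tsum_eq]
  refine tsum_congr fun p => ?_
  simp only [D10, D1m, D1p, sub_add_cancel]
  ring

end HalfSpace

/-- Lemma 8: bound on the quantity `B₂` in the half-space, with a boundary gain. -/
theorem halfspace_lemma8 (α β : ℝ) (u : ℤ → ℤ → ℝ) (hu : memH u) :
    ((α ^ 2 + β ^ 2) / 2) * sqH (D1p (L2 u))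
        + 4 * α * β * ipH (D10 (D20 u)) (L2 u) ≤
      (α ^ 2 + β ^ 2) * (sqH (L2 u) + sqH (D1p (D2p u)))
        - ((α ^ 2 + β ^ 2) / 2) * ∑' k : ℤ, (L2 u 0 k) ^ 2 := by
  obtain ⟨hb, hs⟩ := hu
  have hu2 : Memℓp (restrictH u) 2 := memℓp_two_iff_summable_sq.mpr hs
  have hv := hu2.restrictH_D1p
  have hW := hu2.restrictH_L2
  have hcross : ipH (D10 (D20 u)) (L2 u) = ipH (D20 (D1p u)) (L2 u) := by
    rw [ipH_D10_eq (D20_neg_one hb) hu2.restrictH_D20 hW, D1p_D20, D1p_L2,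
      ipH_D20_L2_eq_zero hv]
    ring
  have hboundary := tsum_sq_zero_add_sqH_D1p_add_ipH_eq_zero hW
  rw [D1p_L2, ipH_eq_inner hW hv.restrictH_L2, toL2_L2 hv] at hboundary
  rw [hcross, D1p_L2, D1p_D2p, ipH_eq_inner hv.restrictH_D20 hW, toL2_D20 hv,
    real_inner_smul_left, sqH_eq_norm_sq hW, sqH_eq_norm_sq hv.restrictH_D2p]
  linear_combination two_mul_mul_inner_add_sub_inner_sub_le α β (w := toL2 (L2 u) hW)
      (norm_toL2_D2m hv) + ((α ^ 2 + β ^ 2) / 2) * hboundary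
end
end
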